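/- Let L be a finite-dimensional Lie algebra over any field F and let I be an ideal of L. Then (N†(L) + I)/I ⊆ N†(L/I). -/

import Mathlib

namespace Paper

open LieAlgebra

section AlgDefs

variable (F : Type*) [Field F] (L : Type*) [LieRing L] [LieAlgebra F L]

/-- The nilradical of a Lie algebra: the largest nilpotent ideal (the sup of nilpotent ideals). -/
noncomputable def nilrad : LieIdeal F L :=
  sSup {I : LieIdeal F L | LieRing.IsNilpotent I}

/-- The nilpotency class of a Lie algebra. -/
noncomputable def nilClass : ℕ := sInf {k | LieModule.lowerCentralSeries F L L k = ⊥}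

/-- A Lie algebra is nilregular if the field has characteristic zero, or characteristic `p > 0`
and its nilradical has nilpotency class less than `p - 1`. -/
noncomputable def Nilregular : Prop :=
  ringChar F = 0 ∨ nilClass F (nilrad F L) < ringChar F - 1

/-- A Lie algebra is solregular if the field has characteristic zero, or characteristic `p > 0`
and its radical has derived length less than `log₂ p`. -/
noncomputable def Solregular : Prop :=
  ringChar F = 0 ∨ 2 ^ LieAlgebra.derivedLength F (LieAlgebra.radical F L) < ringChar F

/-- Regular means nilregular or solregular. -/
noncomputable def Regular : Prop := Nilregular F L ∨ Solregular F L

end AlgDefs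

section IdealDefs

variable {F : Type*} [Field F] {L : Type*} [LieRing L] [LieAlgebra F L]

/-- The centraliser `C_L(I)` of an ideal `I`, as an ideal of `L`. -/
def centralizer (I : LieIdeal F L) : LieIdeal F L where
  carrier := {x : L | ∀ y ∈ I, ⁅x, y⁆ = 0}
  zero_mem' := by intro y hy; simp
  add_mem' := by intro a b ha hb y hy; rw [add_lie, ha y hy, hb y hy, add_zero]
  smul_mem' := by intro c x hx y hy; rw [smul_lie, hx y hy, smul_zero]
  lie_mem := by
    intro x m hm y hy
    have h1 : ⁅x, ⁅m, y⁆⁆ = (0 : L) := by rw [hm y hy, lie_zero]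
    have h2 : ⁅m, ⁅x, y⁆⁆ = (0 : L) := hm _ (I.lie_mem hy)
    show ⁅⁅x, m⁆, y⁆ = (0 : L)
    rw [lie_lie, h1, h2, sub_zero]

/-- The centre `Z(I)` of an ideal `I`, as an ideal of `L`. -/
def idealCenter (I : LieIdeal F L) : LieIdeal F L where
  carrier := {x : L | x ∈ I ∧ ∀ y ∈ I, ⁅x, y⁆ = 0}
  zero_mem' := ⟨I.zero_mem, by intro y hy; simp⟩
  add_mem' := by
    intro a b ha hb
    exact ⟨I.add_mem ha.1 hb.1, fun y hy => by rw [add_lie, ha.2 y hy, hb.2 y hy, add_zero]⟩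
  smul_mem' := by
    intro c x hx
    exact ⟨I.smul_mem c hx.1, fun y hy => by rw [smul_lie, hx.2 y hy, smul_zero]⟩
  lie_mem := by
    intro x m hm
    refine ⟨I.lie_mem hm.1, fun y hy => ?_⟩
    have h1 : ⁅x, ⁅m, y⁆⁆ = (0 : L) := by rw [hm.2 y hy, lie_zero]
    have h2 : ⁅m, ⁅x, y⁆⁆ = (0 : L) := hm.2 _ (I.lie_mem hy)
    show ⁅⁅x, m⁆, y⁆ = (0 : L)
    rw [lie_lie, h1, h2, sub_zero]

/-- The centraliser `C_L(A/B)` of a chief factor, as an ideal of `L`. -/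
def chiefCentralizer (A B : LieIdeal F L) : LieIdeal F L where
  carrier := {x : L | ∀ a ∈ A, ⁅x, a⁆ ∈ B}
  zero_mem' := by intro a ha; simp [B.zero_mem]
  add_mem' := by intro x y hx hy a ha; rw [add_lie]; exact B.add_mem (hx a ha) (hy a ha)
  smul_mem' := by intro c x hx a ha; rw [smul_lie]; exact B.smul_mem c (hx a ha)
  lie_mem := by
    intro x m hm a ha
    show ⁅⁅x, m⁆, a⁆ ∈ B
    rw [lie_lie]
    exact B.sub_mem (B.lie_mem (hm a ha)) (hm _ (A.lie_mem ha))

/-- `A/Z` is a minimal ideal of `L/Z` (via the ideal correspondence). -/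
def IsMinModIdeal (Z A : LieIdeal F L) : Prop :=
  Z < A ∧ ∀ B : LieIdeal F L, Z ≤ B → B ≤ A → B = Z ∨ B = A

/-- `A` is a minimal ideal of `L`. -/
def IsMinimalIdeal (A : LieIdeal F L) : Prop := IsMinModIdeal ⊥ A

/-- An ideal `A` of `L` is quasi-minimal if `A² = A` and `A/Z(A)` is a minimal ideal
of `L/Z(A)`. -/
def IsQuasiMinimal (A : LieIdeal F L) : Prop :=
  ⁅A, A⁆ = A ∧ IsMinModIdeal (idealCenter A) A

end IdealDefs

section MoreDefs

variable (F : Type*) [Field F] (L : Type*) [LieRing L] [LieAlgebra F L]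

/-- `E†(L)`: the subalgebra generated by the quasi-minimal components of `L`. -/
noncomputable def Edagger : LieSubalgebra F L :=
  LieSubalgebra.lieSpan F L (⋃ A ∈ {A : LieIdeal F L | IsQuasiMinimal A}, (A : Set L))

/-- `N†(L) = N(L) + E†(L)`: the quasi-minimal radical of `L`. -/
noncomputable def Ndagger : LieSubalgebra F L :=
  LieIdeal.toLieSubalgebra F L (nilrad F L) ⊔ Edagger F L

/-- The generalised nilradical `N*(L)`: the ideal containing `N = N(L)` with
`N*(L)/N` the sum of all minimal ideals of `L/N` contained in `(N + C_L(N))/N`. -/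
noncomputable def Nstar : LieIdeal F L :=
  nilrad F L ⊔ sSup {A : LieIdeal F L | IsMinModIdeal (nilrad F L) A ∧
    A ≤ nilrad F L ⊔ centralizer (nilrad F L)}

/-- The Frattini ideal: the largest ideal contained in every maximal subalgebra. -/
def frattini : LieIdeal F L :=
  sSup {I : LieIdeal F L | ∀ M : LieSubalgebra F L, IsCoatom M → (I : Set L) ⊆ M}

/-- `Ñ(L)`: the ideal with `Ñ(L)/φ(L) = Soc (L/φ(L))`. -/
noncomputable def Ntilde : LieIdeal F L :=
  frattini F L ⊔ sSup {A : LieIdeal F L | IsMinModIdeal (frattini F L) A}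

/-- A characteristic ideal: one invariant under all derivations. -/
def IsCharIdeal (J : LieIdeal F L) : Prop :=
  ∀ D : LieDerivation F L L, ∀ x ∈ J, D x ∈ J

/-- The characteristic radical `R_c(L)`: the sum of all solvable characteristic ideals. -/
noncomputable def charRadical : LieIdeal F L :=
  sSup {J : LieIdeal F L | LieAlgebra.IsSolvable J ∧ IsCharIdeal F L J}

/-- A subideal: a subalgebra joined to `L` by a chain of successive ideals. -/
def IsSubideal (S : LieSubalgebra F L) : Prop :=
  ∃ n : ℕ, ∃ c : Fin (n + 1) → LieSubalgebra F L,
    c 0 = S ∧ c (Fin.last n) = ⊤ ∧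
    ∀ i : Fin n, c i.castSucc ≤ c i.succ ∧
      ∀ x ∈ c i.succ, ∀ y ∈ c i.castSucc, ⁅x, y⁆ ∈ c i.castSucc

end MoreDefs

/-! Images of nilpotent ideals under a surjection `f` are nilpotent, so `f (N(L)) ⊆ N(L')`.
For a quasi-minimal `A`, minimality of `A/Z(A)` leaves two possibilities for
`(A ∩ ker f) + Z(A)`. If it is `Z(A)`, then `f A ≠ 0`, and the ideals between `Z(f A)` and
`f A` pull back to ideals between `Z(A)` and `A`, so `f A` is quasi-minimal.
If it is `A`, then `A = A² ⊆ [A, ker f] + [A, Z(A)] ⊆ ker f`, so `f A = 0`. -/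

section QuotientMap

variable {F : Type*} [Field F] {L : Type*} [LieRing L] [LieAlgebra F L]

def quotientMk (I : LieIdeal F L) : L →ₗ⁅F⁆ L ⧸ I :=
  { (I : Submodule F L).mkQ with
    toFun := LieSubmodule.Quotient.mk
    map_lie' := rfl }

lemma quotientMk_surjective (I : LieIdeal F L) : Function.Surjective (quotientMk I) :=
  Quot.mk_surjective

end QuotientMap

section SurjectiveImage

variable {F : Type*} [Field F] {L : Type*} [LieRing L] [LieAlgebra F L]
  {L' : Type*} [LieRing L'] [LieAlgebra F L']

def restrictToMap (f : L →ₗ⁅F⁆ L') (J : LieIdeal F L) : J →ₗ⁅F⁆ J.map f where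
  toFun x := ⟨f x, LieIdeal.mem_map x.2⟩
  map_add' x y := by ext; simp
  map_smul' c x := by ext; simp
  map_lie' {x y} := by ext; simp [LieIdeal.coe_bracket_of_module]

lemma restrictToMap_surjective {f : L →ₗ⁅F⁆ L'} (hf : Function.Surjective f)
    (J : LieIdeal F L) : Function.Surjective (restrictToMap f J) := by
  rintro ⟨y, hy⟩
  obtain ⟨x, hx⟩ := LieIdeal.mem_map_of_surjective hf hy
  exact ⟨x, Subtype.ext hx⟩

lemma isNilpotent_map {f : L →ₗ⁅F⁆ L'} (hf : Function.Surjective f) {J : LieIdeal F L}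
    (hJ : LieRing.IsNilpotent J) : LieRing.IsNilpotent (J.map f) :=
  (restrictToMap_surjective hf J).lieAlgebra_isNilpotent

lemma map_nilrad_le {f : L →ₗ⁅F⁆ L'} (hf : Function.Surjective f) :
    (nilrad F L).map f ≤ nilrad F L' := by
  rw [nilrad, LieIdeal.map_le_iff_le_comap]
  refine sSup_le fun J hJ => ?_
  rw [← LieIdeal.map_le_iff_le_comap]
  exact le_sSup (isNilpotent_map hf hJ)

end SurjectiveImage

section Center

variable {F : Type*} [Field F] {L : Type*} [LieRing L] [LieAlgebra F L]

lemma idealCenter_le (A : LieIdeal F L) : idealCenter A ≤ A := fun _ hx => hx.1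

lemma lie_idealCenter_eq_bot (A : LieIdeal F L) : ⁅A, idealCenter A⁆ = ⊥ := by
  rw [LieSubmodule.lie_eq_bot_iff]
  intro x hx z hz
  rw [← lie_skew, hz.2 x hx, neg_zero]

lemma idealCenter_lt_of_lie_self_eq {A : LieIdeal F L} (hAA : ⁅A, A⁆ = A) (hA : A ≠ ⊥) :
    idealCenter A < A := by
  refine lt_of_le_of_ne (idealCenter_le A) fun hZ => hA ?_
  rw [← hAA, ← lie_idealCenter_eq_bot A, hZ]

lemma le_of_le_sup_idealCenter {A J : LieIdeal F L} (hAA : ⁅A, A⁆ = A)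
    (h : A ≤ J ⊔ idealCenter A) : A ≤ J :=
  calc A = ⁅A, A⁆ := hAA.symm
    _ ≤ ⁅A, J ⊔ idealCenter A⁆ := LieSubmodule.mono_lie_right A h
    _ = ⁅A, J⁆ := by rw [LieSubmodule.lie_sup, lie_idealCenter_eq_bot, sup_bot_eq]
    _ ≤ J := LieSubmodule.lie_le_right J A

variable {L' : Type*} [LieRing L'] [LieAlgebra F L']

lemma map_mem_idealCenter_map {f : L →ₗ⁅F⁆ L'} (hf : Function.Surjective f) {A : LieIdeal F L}
    {z : L} (hz : z ∈ idealCenter A) : f z ∈ idealCenter (A.map f) := by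
  refine ⟨LieIdeal.mem_map hz.1, fun y hy => ?_⟩
  obtain ⟨⟨a, ha⟩, rfl⟩ := LieIdeal.mem_map_of_surjective hf hy
  rw [← LieHom.map_lie, hz.2 a ha, map_zero]

end Center

section QuasiMinimal

variable {F : Type*} [Field F] {L : Type*} [LieRing L] [LieAlgebra F L]
  {L' : Type*} [LieRing L'] [LieAlgebra F L']

lemma lie_map_self_eq {f : L →ₗ⁅F⁆ L'} (hf : Function.Surjective f) {A : LieIdeal F L}
    (hAA : ⁅A, A⁆ = A) : ⁅A.map f, A.map f⁆ = A.map f := by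
  rw [← LieIdeal.map_bracket_eq f hf, hAA]

lemma isMinModIdeal_idealCenter_map {f : L →ₗ⁅F⁆ L'} (hf : Function.Surjective f)
    {A : LieIdeal F L} (hA : IsMinModIdeal (idealCenter A) A)
    (hAA : ⁅A, A⁆ = A) (hker : A ⊓ f.ker ≤ idealCenter A) :
    IsMinModIdeal (idealCenter (A.map f)) (A.map f) := by
  obtain ⟨hZA, hmin⟩ := hA
  have hA_ker : ¬ A ≤ f.ker := fun h => hZA.not_ge (le_trans (le_inf le_rfl h) hker)
  refine ⟨idealCenter_lt_of_lie_self_eq (lie_map_self_eq hf hAA) ?_, fun B hZB hBA => ?_⟩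
  · rwa [Ne, LieIdeal.map_eq_bot_iff]
  rcases hmin (B.comap f ⊓ A) (fun z hz => ⟨hZB (map_mem_idealCenter_map hf hz), hz.1⟩)
      inf_le_right with hB | hB
  · refine Or.inl (le_antisymm (fun b hb => ?_) hZB)
    obtain ⟨⟨a, ha⟩, rfl⟩ := LieIdeal.mem_map_of_surjective hf (hBA hb)
    exact map_mem_idealCenter_map hf (hB.le ⟨hb, ha⟩)
  · refine Or.inr (le_antisymm hBA ?_)
    rw [LieIdeal.map_le_iff_le_comap]
    exact fun a ha => (hB.ge ha).1

lemma IsQuasiMinimal.le_ker_or_map {f : L →ₗ⁅F⁆ L'} (hf : Function.Surjective f)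
    {A : LieIdeal F L} (hA : IsQuasiMinimal A) :
    A ≤ f.ker ∨ IsQuasiMinimal (A.map f) := by
  obtain ⟨hAA, hZA, hmin⟩ := hA
  rcases hmin (A ⊓ f.ker ⊔ idealCenter A) le_sup_right
      (sup_le inf_le_left (idealCenter_le A)) with hZ | hZ
  · exact Or.inr ⟨lie_map_self_eq hf hAA,
      isMinModIdeal_idealCenter_map hf ⟨hZA, hmin⟩ hAA (hZ ▸ le_sup_left)⟩
  · exact Or.inl (le_of_le_sup_idealCenter hAA (hZ.ge.trans (sup_le_sup_right inf_le_right _)))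

lemma Edagger_le_comap {f : L →ₗ⁅F⁆ L'} (hf : Function.Surjective f) :
    Edagger F L ≤ (Edagger F L').comap f := by
  rw [Edagger, LieSubalgebra.lieSpan_le]
  simp only [Set.iUnion_subset_iff]
  intro A hA x hx
  rcases hA.le_ker_or_map hf with hker | hmap
  · show f x ∈ Edagger F L'
    rw [LieHom.mem_ker.1 (hker hx)]
    exact zero_mem _
  · exact LieSubalgebra.subset_lieSpan (Set.mem_biUnion hmap (LieIdeal.mem_map hx))

lemma Ndagger_le_comap {f : L →ₗ⁅F⁆ L'} (hf : Function.Surjective f) :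
    Ndagger F L ≤ (Ndagger F L').comap f := by
  refine sup_le (fun x hx => ?_) (fun x hx => ?_)
  · exact le_sup_left (b := Edagger F L') (map_nilrad_le hf (LieIdeal.mem_map hx))
  · exact le_sup_right (a := (nilrad F L').toLieSubalgebra) (Edagger_le_comap hf hx)

end QuasiMinimal

theorem stmt_16_general (F : Type*) [Field F] (L : Type*) [LieRing L] [LieAlgebra F L]
    (I : LieIdeal F L) :
    ∀ x ∈ Ndagger F L,
      LieSubmodule.Quotient.mk (N := I) x ∈ Ndagger F (L ⧸ I) :=
  fun _ hx => Ndagger_le_comap (quotientMk_surjective I) hx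

/-- For any ideal `I`, `(N†(L) + I)/I ⊆ N†(L/I)`. -/
theorem stmt_16 (F : Type*) [Field F] (L : Type*) [LieRing L] [LieAlgebra F L]
    [FiniteDimensional F L] (I : LieIdeal F L) :
    ∀ x ∈ Ndagger F L,
      LieSubmodule.Quotient.mk (N := I) x ∈ Ndagger F (L ⧸ I) :=
  stmt_16_general F L I

end Paper
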